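/- Let M > 0 and r₀ ∈ (0, 2M). Let b ∈ (0, ∞], and let γ = (t, x) : [0, b) → ℝ × ℝ³ be a C¹ curve with 0 < ‖x(τ)‖ < 2M, Q_M(t'(τ), x'(τ), x(τ)) = −1, and ⟨x(τ), x'(τ)⟩ > 0 for every τ ∈ [0, b), with ‖x(0)‖ < r₀. Assume γ is past-inextensible: if b < ∞, there is no continuous map γ̄ : [0, b] → ℝ × ℝ³ extending γ whose value at b has spatial part of norm strictly between 0 and 2M. Then there exists τ ∈ (0, b) with ‖x(τ)‖ = r₀; i.e., every past-inextensible unit-speed timelike curve starting in the region ‖x‖ < r₀ intersects the hypersurface S_{r₀} := {(t,x) ∈ M_Sch : ‖x‖ = r₀}. -/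

import Mathlib

/-!
Since `d‖x‖²/dτ = 2⟪x, x'⟫ > 0`, the radius increases along the curve; if it never reaches `r₀`,
it stays in the shell `‖x 0‖ ≤ ‖x‖ < r₀`, a compact part of `0 < ‖x‖ < 2M`. Multiplied by
`(2M - r) r²`, the condition `Q_M = -1` reads
`(2M - r)² r t'² + (2M - r) r² ‖x'‖² + (2M - r) r² = 2M ⟪x, x'⟫²`, and with Cauchy–Schwarz this
bounds `⟪x, x'⟫` below by a positive constant on the shell and bounds `‖(t', x')‖` by a constant
multiple of `⟪x, x'⟫`. If `b = ∞`, the first bound makes `‖x‖²` grow at least linearly, which is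
absurd. If `b < ∞`, the second bounds `dist (γ σ) (γ τ)` by a multiple of `‖x τ‖² - ‖x σ‖²`; as
`‖x‖²` is monotone and bounded, `γ` is Cauchy at `b` and extends continuously to `[0, b]` with
`‖x b‖ ∈ [‖x 0‖, r₀]`, against past-inextensibility.
-/

/-- The Schwarzschild quadratic form of mass `M`, evaluated on a velocity `(t', x')`
at a point with spatial part `x` (where `0 < ‖x‖ < 2M`). -/
noncomputable def QM (M : ℝ) (t' : ℝ) (x' x : EuclideanSpace ℝ (Fin 3)) : ℝ :=
  (2 * M / ‖x‖ - 1) * t' ^ 2 + ‖x'‖ ^ 2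
    - (2 * M / ((2 * M - ‖x‖) * ‖x‖ ^ 2)) * (inner ℝ x x' : ℝ) ^ 2

open Set Filter Topology
open scoped RealInnerProductSpace

section SchwarzschildForm

variable {M T : ℝ} {v x : EuclideanSpace ℝ (Fin 3)}

theorem QM_eq_neg_one_iff (hx : 0 < ‖x‖) (hxM : ‖x‖ < 2 * M) :
    QM M T v x = -1 ↔
      (2 * M - ‖x‖) ^ 2 * ‖x‖ * T ^ 2 + (2 * M - ‖x‖) * ‖x‖ ^ 2 * ‖v‖ ^ 2
        + (2 * M - ‖x‖) * ‖x‖ ^ 2 = 2 * M * ⟪x, v⟫ ^ 2 := by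
  have : 2 * M - ‖x‖ ≠ 0 := by linarith
  rw [QM]
  field_simp
  constructor <;> intro h <;> linarith

theorem mul_le_sq_inner_of_QM_eq_neg_one (hx : 0 < ‖x‖) (hxM : ‖x‖ < 2 * M)
    (hQ : QM M T v x = -1) : (2 * M - ‖x‖) * ‖x‖ ≤ ⟪x, v⟫ ^ 2 := by
  have hid := (QM_eq_neg_one_iff hx hxM).mp hQ
  have hcs : ⟪x, v⟫ ^ 2 ≤ ‖x‖ ^ 2 * ‖v‖ ^ 2 := by
    rw [← mul_pow, ← sq_abs]
    exact pow_le_pow_left₀ (abs_nonneg _) (abs_real_inner_le_norm x v) 2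
  have hgap : 0 < 2 * M - ‖x‖ := by linarith
  nlinarith [mul_le_mul_of_nonneg_left hcs hgap.le, mul_nonneg (sq_nonneg (2 * M - ‖x‖))
    (mul_nonneg hx.le (sq_nonneg T))]

theorem exists_pos_le_inner_of_QM_eq_neg_one {ρ r₀ : ℝ} (hρ : 0 < ρ) (hr₀ : r₀ < 2 * M) :
    ∃ c > 0, ∀ (T : ℝ) (v x : EuclideanSpace ℝ (Fin 3)), ρ ≤ ‖x‖ → ‖x‖ ≤ r₀ →
      QM M T v x = -1 → 0 ≤ ⟪x, v⟫ → c ≤ ⟪x, v⟫ := by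
  refine ⟨√((2 * M - r₀) * ρ), Real.sqrt_pos.mpr (mul_pos (by linarith) hρ), ?_⟩
  intro T v x hρx hxr₀ hQ hp
  have hsq := mul_le_sq_inner_of_QM_eq_neg_one (hρ.trans_le hρx) (by linarith) hQ
  calc √((2 * M - r₀) * ρ) ≤ √(⟪x, v⟫ ^ 2) :=
        Real.sqrt_le_sqrt (hsq.trans' (mul_le_mul (by linarith) hρx hρ.le (by linarith)))
    _ = ⟪x, v⟫ := Real.sqrt_sq hp

theorem exists_norm_le_mul_inner_of_QM_eq_neg_one {ρ r₀ : ℝ} (hρ : 0 < ρ) (hr₀ : r₀ < 2 * M) :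
    ∃ C, ∀ (T : ℝ) (v x : EuclideanSpace ℝ (Fin 3)), ρ ≤ ‖x‖ → ‖x‖ ≤ r₀ →
      QM M T v x = -1 → 0 ≤ ⟪x, v⟫ → ‖(T, v)‖ ≤ C * ⟪x, v⟫ := by
  set c := min ((2 * M - r₀) ^ 2 * ρ) ((2 * M - r₀) * ρ ^ 2)
  have hδ₀ : 0 < 2 * M - r₀ := by linarith
  have hc : 0 < c := lt_min (by positivity) (by positivity)
  refine ⟨√(2 * M / c), fun T v x hρx hxr₀ hQ hp => ?_⟩
  have hid := (QM_eq_neg_one_iff (hρ.trans_le hρx) (by linarith)).mp hQ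
  have hδ : 2 * M - r₀ ≤ 2 * M - ‖x‖ := by linarith
  have hcT : c ≤ (2 * M - ‖x‖) ^ 2 * ‖x‖ :=
    (min_le_left _ _).trans (mul_le_mul (pow_le_pow_left₀ (by linarith) hδ 2) hρx hρ.le
      (sq_nonneg _))
  have hcv : c ≤ (2 * M - ‖x‖) * ‖x‖ ^ 2 :=
    (min_le_right _ _).trans (mul_le_mul hδ (pow_le_pow_left₀ hρ.le hρx 2) (sq_nonneg _)
      (by linarith))
  have hbound : ∀ a : ℝ, c * a ^ 2 ≤ 2 * M * ⟪x, v⟫ ^ 2 → |a| ≤ √(2 * M / c) * ⟪x, v⟫ := by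
    intro a ha
    calc |a| ≤ √(2 * M / c * ⟪x, v⟫ ^ 2) := Real.abs_le_sqrt (by
          rw [div_mul_eq_mul_div, le_div_iff₀ hc]; linarith)
      _ = √(2 * M / c) * ⟪x, v⟫ := by rw [Real.sqrt_mul' _ (sq_nonneg _), Real.sqrt_sq hp]
  rw [Prod.norm_mk, Real.norm_eq_abs, ← abs_norm v]
  refine max_le (hbound T ?_) (hbound ‖v‖ ?_)
  · nlinarith [mul_le_mul_of_nonneg_right hcT (sq_nonneg T),
      mul_le_mul_of_nonneg_right hcv (sq_nonneg ‖v‖), sq_nonneg ‖v‖]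
  · nlinarith [mul_le_mul_of_nonneg_right hcT (sq_nonneg T),
      mul_le_mul_of_nonneg_right hcv (sq_nonneg ‖v‖), sq_nonneg T]

end SchwarzschildForm

section Curves

variable {E F X : Type*} [NormedAddCommGroup E] [NormedSpace ℝ E]
  [NormedAddCommGroup F] [InnerProductSpace ℝ F] {a b : ℝ}

theorem monotoneOn_norm_sq_sub_mul {s : Set ℝ} {x x' : ℝ → F} {c : ℝ} (hs : s.OrdConnected)
    (hx : ∀ τ ∈ s, HasDerivWithinAt x (x' τ) s τ) (hc : ∀ τ ∈ s, c ≤ ⟪x τ, x' τ⟫) :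
    MonotoneOn (fun τ => ‖x τ‖ ^ 2 - 2 * c * τ) s := by
  have hderiv : ∀ τ ∈ s, HasDerivWithinAt (fun τ => ‖x τ‖ ^ 2 - 2 * c * τ)
      (2 * ⟪x τ, x' τ⟫ - 2 * c) s τ := fun τ hτ =>
    (hx τ hτ).norm_sq.sub (by simpa using (hasDerivWithinAt_id τ s).const_mul (2 * c))
  refine monotoneOn_of_hasDerivWithinAt_nonneg hs.convex
    (fun τ hτ => (hderiv τ hτ).continuousWithinAt)
    (fun τ hτ => (hderiv τ (interior_subset hτ)).mono interior_subset) fun τ hτ => ?_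
  linarith [hc τ (interior_subset hτ)]

theorem monotoneOn_norm_of_inner_nonneg {s : Set ℝ} {x x' : ℝ → F} (hs : s.OrdConnected)
    (hx : ∀ τ ∈ s, HasDerivWithinAt x (x' τ) s τ) (hp : ∀ τ ∈ s, 0 ≤ ⟪x τ, x' τ⟫) :
    MonotoneOn (‖x ·‖) s := fun σ hσ τ hτ hστ => by
  have := monotoneOn_norm_sq_sub_mul hs hx hp hσ hτ hστ
  simp only [mul_zero, zero_mul, sub_zero] at this
  exact (sq_le_sq₀ (norm_nonneg _) (norm_nonneg _)).mp this

theorem IsPreconnected.forall_lt_of_forall_ne {α : Type*} [TopologicalSpace X] [LinearOrder α]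
    [TopologicalSpace α] [OrderClosedTopology α] {s : Set X} {f : X → α} {p : X} {r : α}
    (hs : IsPreconnected s) (hp : p ∈ s) (hf : ContinuousOn f s) (hfp : f p < r)
    (hne : ∀ τ ∈ s, τ ≠ p → f τ ≠ r) : ∀ τ ∈ s, f τ < r := by
  intro τ hτ
  by_contra! hle
  obtain ⟨σ, hσ, hσr⟩ := hs.intermediate_value hp hτ hf ⟨hfp.le, hle⟩
  exact hne σ hσ (by rintro rfl; exact hfp.ne hσr) hσr

theorem dist_le_sub_of_norm_deriv_le {f f' : ℝ → E} {g g' : ℝ → ℝ}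
    (hf : ∀ τ ∈ Ico a b, HasDerivWithinAt f (f' τ) (Ico a b) τ)
    (hg : ∀ τ ∈ Ico a b, HasDerivWithinAt g (g' τ) (Ico a b) τ)
    (hfg : ∀ τ ∈ Ico a b, ‖f' τ‖ ≤ g' τ) {s u : ℝ} (hs : s ∈ Ico a b) (hu : u ∈ Ico a b)
    (hsu : s ≤ u) : dist (f s) (f u) ≤ g u - g s := by
  have hsub : Icc s u ⊆ Ico a b := Icc_subset_Ico hs.1 hu.2
  have hsub' : Ico s u ⊆ Ico a b := Ico_subset_Icc_self.trans hsub
  have hright : ∀ τ ∈ Ico s u, Ico a b ∈ 𝓝[≥] τ := fun τ hτ =>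
    mem_of_superset (Ico_mem_nhdsGE (hsub' hτ).2) (Ico_subset_Ico_left (hsub' hτ).1)
  rw [dist_comm, dist_eq_norm]
  refine image_norm_le_of_norm_deriv_right_le_deriv_boundary' (f := fun τ => f τ - f s)
    (B := fun τ => g τ - g s) (fun τ hτ => ((hf τ (hsub hτ)).continuousWithinAt.mono hsub).sub
      continuousWithinAt_const)
    (fun τ hτ => ((hf τ (hsub' hτ)).sub_const (f s)).mono_of_mem_nhdsWithin (hright τ hτ))
    (by simp) (fun τ hτ => ((hg τ (hsub hτ)).continuousWithinAt.mono hsub).sub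
      continuousWithinAt_const)
    (fun τ hτ => ((hg τ (hsub' hτ)).sub_const (g s)).mono_of_mem_nhdsWithin (hright τ hτ))
    (fun τ hτ => hfg τ (hsub' hτ)) ⟨hsu, le_rfl⟩

theorem exists_tendsto_nhdsLT_of_dist_le_sub [MetricSpace X] [CompleteSpace X] {f : ℝ → X}
    {g : ℝ → ℝ} (hab : a < b) (hg : BddAbove (g '' Ico a b))
    (hfg : ∀ s ∈ Ico a b, ∀ u ∈ Ico a b, s ≤ u → dist (f s) (f u) ≤ g u - g s) :
    ∃ P, Tendsto f (𝓝[<] b) (𝓝 P) := by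
  refine cauchy_map_iff_exists_tendsto.mp (Metric.cauchy_iff.mpr ⟨inferInstance, fun ε hε => ?_⟩)
  obtain ⟨_, ⟨σ, hσ, rfl⟩, hσε⟩ := exists_lt_of_lt_csSup ((nonempty_Ico.mpr hab).image g)
    (sub_lt_self (sSup (g '' Ico a b)) hε)
  have hclose : ∀ s ∈ Ico σ b, ∀ u ∈ Ico σ b, s ≤ u → dist (f s) (f u) < ε := by
    intro s hs u hu hsu
    have hs' : s ∈ Ico a b := ⟨hσ.1.trans hs.1, hs.2⟩
    have hu' : u ∈ Ico a b := ⟨hσ.1.trans hu.1, hu.2⟩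
    have hgσ := dist_nonneg.trans (hfg σ hσ s hs' hs.1)
    have hgu := le_csSup hg (mem_image_of_mem g hu')
    linarith [hfg s hs' u hu' hsu]
  refine ⟨f '' Ico σ b, image_mem_map (Ico_mem_nhdsLT hσ.2), ?_⟩
  rintro _ ⟨s, hs, rfl⟩ _ ⟨u, hu, rfl⟩
  rcases le_total s u with hsu | hus
  · exact hclose s hs u hu hsu
  · exact dist_comm (f s) (f u) ▸ hclose u hu s hs hus

theorem exists_tendsto_nhdsLT_of_norm_deriv_le_mul_inner [CompleteSpace E] {f f' : ℝ → E}
    {x x' : ℝ → F} {C R : ℝ} (hab : a < b)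
    (hf : ∀ τ ∈ Ico a b, HasDerivWithinAt f (f' τ) (Ico a b) τ)
    (hx : ∀ τ ∈ Ico a b, HasDerivWithinAt x (x' τ) (Ico a b) τ)
    (hfx : ∀ τ ∈ Ico a b, ‖f' τ‖ ≤ C * ⟪x τ, x' τ⟫) (hR : ∀ τ ∈ Ico a b, ‖x τ‖ ≤ R) :
    ∃ P, Tendsto f (𝓝[<] b) (𝓝 P) := by
  refine exists_tendsto_nhdsLT_of_dist_le_sub (g := fun τ => C / 2 * ‖x τ‖ ^ 2) hab ?_
    fun s hs u hu hsu => dist_le_sub_of_norm_deriv_le hf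
      (fun τ hτ => (hx τ hτ).norm_sq.const_mul (C / 2)) (fun τ hτ => ?_) hs hu hsu
  · refine ⟨|C| / 2 * R ^ 2, ?_⟩
    rintro _ ⟨τ, hτ, rfl⟩
    calc C / 2 * ‖x τ‖ ^ 2 ≤ |C| / 2 * ‖x τ‖ ^ 2 := by gcongr; exact le_abs_self C
      _ ≤ |C| / 2 * R ^ 2 := by gcongr; exact hR τ hτ
  · exact (hfx τ hτ).trans_eq (by ring)

theorem continuousOn_update_Icc_of_tendsto [TopologicalSpace X] {f : ℝ → X} {P : X}
    (hab : a < b) (hf : ContinuousOn f (Ico a b)) (hP : Tendsto f (𝓝[<] b) (𝓝 P)) :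
    ContinuousOn (Function.update f b P) (Icc a b) := by
  intro τ hτ
  rcases hτ.2.eq_or_lt with rfl | hτb
  · rwa [continuousWithinAt_update_same, Icc_sdiff_right, nhdsWithin_Ico_eq_nhdsLT hab]
  · rw [continuousWithinAt_update_of_ne hτb.ne, ← continuousWithinAt_sdiff_singleton (y := b),
      Icc_sdiff_right]
    exact hf τ ⟨hτ.1, hτb⟩

theorem exists_continuousOn_Icc_extension_of_norm_deriv_le_mul_inner [CompleteSpace E]
    [CompleteSpace F] {t t' : ℝ → E} {x x' : ℝ → F} {C ρ R : ℝ} (hab : a < b)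
    (ht : ∀ τ ∈ Ico a b, HasDerivWithinAt t (t' τ) (Ico a b) τ)
    (hx : ∀ τ ∈ Ico a b, HasDerivWithinAt x (x' τ) (Ico a b) τ)
    (hspeed : ∀ τ ∈ Ico a b, ‖(t' τ, x' τ)‖ ≤ C * ⟪x τ, x' τ⟫)
    (hρR : ∀ τ ∈ Ico a b, ‖x τ‖ ∈ Icc ρ R) :
    ∃ γ : ℝ → E × F, ContinuousOn γ (Icc a b) ∧ (∀ τ ∈ Ico a b, γ τ = (t τ, x τ)) ∧
      ‖(γ b).2‖ ∈ Icc ρ R := by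
  have hγ : ∀ τ ∈ Ico a b, HasDerivWithinAt (fun τ => (t τ, x τ)) (t' τ, x' τ) (Ico a b) τ :=
    fun τ hτ => (ht τ hτ).prodMk (hx τ hτ)
  obtain ⟨P, hP⟩ := exists_tendsto_nhdsLT_of_norm_deriv_le_mul_inner hab hγ hx hspeed
    fun τ hτ => (hρR τ hτ).2
  refine ⟨Function.update _ b P,
    continuousOn_update_Icc_of_tendsto hab (fun τ hτ => (hγ τ hτ).continuousWithinAt) hP,
    fun τ hτ => Function.update_of_ne hτ.2.ne _ _, ?_⟩
  rw [Function.update_self]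
  exact isClosed_Icc.mem_of_tendsto ((continuous_snd.tendsto P).comp hP).norm
    (mem_of_superset (Ico_mem_nhdsLT hab) hρR)

end Curves

theorem past_inextensible_curve_meets_hypersurface_general (M : ℝ) (r₀ : ℝ) (hr₀' : r₀ < 2 * M)
    (b : EReal) (hb : 0 < b)
    (t t' : ℝ → ℝ) (x x' : ℝ → EuclideanSpace ℝ (Fin 3))
    (ht : ∀ τ : ℝ, 0 ≤ τ → (τ : EReal) < b →
      HasDerivWithinAt t (t' τ) {σ : ℝ | 0 ≤ σ ∧ (σ : EReal) < b} τ)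
    (hx : ∀ τ : ℝ, 0 ≤ τ → (τ : EReal) < b →
      HasDerivWithinAt x (x' τ) {σ : ℝ | 0 ≤ σ ∧ (σ : EReal) < b} τ)
    (hr : ∀ τ : ℝ, 0 ≤ τ → (τ : EReal) < b → 0 < ‖x τ‖ ∧ ‖x τ‖ < 2 * M)
    (hQ : ∀ τ : ℝ, 0 ≤ τ → (τ : EReal) < b → QM M (t' τ) (x' τ) (x τ) = -1)
    (hpd : ∀ τ : ℝ, 0 ≤ τ → (τ : EReal) < b → (0 : ℝ) < inner ℝ (x τ) (x' τ))
    (hx0 : ‖x 0‖ < r₀)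
    (hinext : ∀ bR : ℝ, b = (bR : EReal) →
      ¬ ∃ γ' : ℝ → ℝ × EuclideanSpace ℝ (Fin 3),
        ContinuousOn γ' (Set.Icc 0 bR) ∧
        (∀ τ ∈ Set.Ico 0 bR, γ' τ = (t τ, x τ)) ∧
        0 < ‖(γ' bR).2‖ ∧ ‖(γ' bR).2‖ < 2 * M) :
    ∃ τ : ℝ, 0 < τ ∧ (τ : EReal) < b ∧ ‖x τ‖ = r₀ := by
  by_contra! hcon
  set S := {σ : ℝ | 0 ≤ σ ∧ (σ : EReal) < b} with hS
  have h0 : (0 : ℝ) ∈ S := ⟨le_rfl, mod_cast hb⟩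
  have hSc : S.OrdConnected :=
    ⟨fun u hu v hv w hw => ⟨hu.1.trans hw.1, (EReal.coe_le_coe_iff.2 hw.2).trans_lt hv.2⟩⟩
  have hxd : ∀ τ ∈ S, HasDerivWithinAt x (x' τ) S τ := fun τ hτ => hx τ hτ.1 hτ.2
  have hmono := monotoneOn_norm_of_inner_nonneg hSc hxd fun τ hτ => (hpd τ hτ.1 hτ.2).le
  have hlt : ∀ τ ∈ S, ‖x τ‖ < r₀ :=
    hSc.isPreconnected.forall_lt_of_forall_ne h0
      (fun τ hτ => (hxd τ hτ).continuousWithinAt.norm) hx0 fun τ hτ hτ0 =>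
        hcon τ (hτ.1.lt_of_ne' hτ0) hτ.2
  have hshell : ∀ τ ∈ S, ‖x τ‖ ∈ Icc ‖x 0‖ r₀ := fun τ hτ => ⟨hmono h0 hτ hτ.1, (hlt τ hτ).le⟩
  have hρ : 0 < ‖x 0‖ := (hr 0 le_rfl h0.2).1
  obtain ⟨c, hc, hcp⟩ := exists_pos_le_inner_of_QM_eq_neg_one hρ hr₀'
  obtain ⟨C, hC⟩ := exists_norm_le_mul_inner_of_QM_eq_neg_one hρ hr₀'
  have hvel : ∀ τ ∈ S, c ≤ ⟪x τ, x' τ⟫ ∧ ‖(t' τ, x' τ)‖ ≤ C * ⟪x τ, x' τ⟫ := fun τ hτ =>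
    ⟨hcp _ _ _ (hshell τ hτ).1 (hshell τ hτ).2 (hQ τ hτ.1 hτ.2) (hpd τ hτ.1 hτ.2).le,
      hC _ _ _ (hshell τ hτ).1 (hshell τ hτ).2 (hQ τ hτ.1 hτ.2) (hpd τ hτ.1 hτ.2).le⟩
  rcases eq_or_ne b ⊤ with rfl | hbtop
  · have hmem : r₀ ^ 2 / (2 * c) ∈ S := ⟨by positivity, EReal.coe_lt_top _⟩
    have hgrow := monotoneOn_norm_sq_sub_mul hSc hxd (fun τ hτ => (hvel τ hτ).1) h0 hmem hmem.1
    field_simp at hgrow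
    nlinarith [hlt _ hmem, norm_nonneg (x (r₀ ^ 2 / (2 * c)))]
  · lift b to ℝ using ⟨hbtop, hb.ne_bot⟩ with bR
    clear_value S
    obtain rfl : S = Ico 0 bR := by rw [hS]; ext σ; simp
    obtain ⟨γ, hγc, hγ, hγb⟩ := exists_continuousOn_Icc_extension_of_norm_deriv_le_mul_inner
      (mod_cast hb) (fun τ hτ => ht τ hτ.1 (mod_cast hτ.2)) hxd (fun τ hτ => (hvel τ hτ).2) hshell
    exact hinext bR rfl ⟨γ, hγc, hγ, hρ.trans_le hγb.1, hγb.2.trans_lt hr₀'⟩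

/-- Let `M > 0` and `r₀ ∈ (0, 2M)`. Let `b ∈ (0, ∞]`, and let
`γ = (t, x) : [0, b) → ℝ × ℝ³` be a C¹ curve with `0 < ‖x(τ)‖ < 2M`,
`Q_M(t'(τ), x'(τ), x(τ)) = −1`, and `⟨x(τ), x'(τ)⟩ > 0` for every `τ ∈ [0, b)`,
with `‖x(0)‖ < r₀`. Assume `γ` is past-inextensible: if `b < ∞`, there is no
continuous map `γ̄ : [0, b] → ℝ × ℝ³` extending `γ` whose value at `b` has spatial
part of norm strictly between `0` and `2M`. Then there exists `τ ∈ (0, b)` with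
`‖x(τ)‖ = r₀`; i.e., every past-inextensible unit-speed timelike curve starting in
the region `‖x‖ < r₀` intersects the hypersurface `S_{r₀}`. -/
theorem past_inextensible_curve_meets_hypersurface (M : ℝ) (hM : 0 < M)
    (r₀ : ℝ) (hr₀ : 0 < r₀) (hr₀' : r₀ < 2 * M)
    (b : EReal) (hb : 0 < b)
    (t t' : ℝ → ℝ) (x x' : ℝ → EuclideanSpace ℝ (Fin 3))
    (ht : ∀ τ : ℝ, 0 ≤ τ → (τ : EReal) < b →
      HasDerivWithinAt t (t' τ) {σ : ℝ | 0 ≤ σ ∧ (σ : EReal) < b} τ)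
    (hx : ∀ τ : ℝ, 0 ≤ τ → (τ : EReal) < b →
      HasDerivWithinAt x (x' τ) {σ : ℝ | 0 ≤ σ ∧ (σ : EReal) < b} τ)
    (ht'c : ContinuousOn t' {σ : ℝ | 0 ≤ σ ∧ (σ : EReal) < b})
    (hx'c : ContinuousOn x' {σ : ℝ | 0 ≤ σ ∧ (σ : EReal) < b})
    (hr : ∀ τ : ℝ, 0 ≤ τ → (τ : EReal) < b → 0 < ‖x τ‖ ∧ ‖x τ‖ < 2 * M)
    (hQ : ∀ τ : ℝ, 0 ≤ τ → (τ : EReal) < b → QM M (t' τ) (x' τ) (x τ) = -1)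
    (hpd : ∀ τ : ℝ, 0 ≤ τ → (τ : EReal) < b → (0 : ℝ) < inner ℝ (x τ) (x' τ))
    (hx0 : ‖x 0‖ < r₀)
    (hinext : ∀ bR : ℝ, b = (bR : EReal) →
      ¬ ∃ γ' : ℝ → ℝ × EuclideanSpace ℝ (Fin 3),
        ContinuousOn γ' (Set.Icc 0 bR) ∧
        (∀ τ ∈ Set.Ico 0 bR, γ' τ = (t τ, x τ)) ∧
        0 < ‖(γ' bR).2‖ ∧ ‖(γ' bR).2‖ < 2 * M) :
    ∃ τ : ℝ, 0 < τ ∧ (τ : EReal) < b ∧ ‖x τ‖ = r₀ :=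
  past_inextensible_curve_meets_hypersurface_general M r₀ hr₀' b hb t t' x x' ht hx hr hQ hpd hx0
    hinext
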